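/- arXiv:2407.04342 — 4 statements merged into one kernel-verified Lean document; each statement's English description precedes it below -/
import Mathlib

section
/- Let (G = (V,E), r) be an instance of the MLSA in dags, let 𝒮_G = {U ⊆ V : ∃ v ∈ V, ∅ ≠ U ⊆ Γ⁺_G(v)}, and let A ⊆ 𝒮_G be a collection of pairwise disjoint sets. Then there exists a spanning r-arborescence in G with at least 1 + Σ_{s ∈ A} (|s| − 1) leaves. -/
open Finset

variable {V : Type} [Fintype V] [DecidableEq V]

/-- The out-neighborhood of `v` in the digraph with arc set `E`. -/
def outNbr (E : Finset (V × V)) (v : V) : Finset V :=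
  (E.filter (fun e => e.1 = v)).image Prod.snd

/-- The in-neighborhood of `v` in the digraph with arc set `E`. -/
def inNbr (E : Finset (V × V)) (v : V) : Finset V :=
  (E.filter (fun e => e.2 = v)).image Prod.fst

/-- `v` is reachable from `u` via a directed path along arcs of `E`. -/
def Reaches (E : Finset (V × V)) (u v : V) : Prop :=
  Relation.ReflTransGen (fun a b => (a, b) ∈ E) u v

/-- A spanning `r`-arborescence (on the whole vertex type): `r` has no entering arc,
every other vertex has exactly one entering arc, and every vertex is reachable from `r`. -/
def IsArborescence (E : Finset (V × V)) (r : V) : Prop :=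
  inNbr E r = ∅ ∧ (∀ v : V, v ≠ r → (inNbr E v).card = 1) ∧ ∀ v : V, Reaches E r v

/-- The leaves: vertices with out-degree zero. -/
def leaves (E : Finset (V × V)) : Finset V :=
  Finset.univ.filter (fun v => outNbr E v = ∅)


/-- The digraph with arc set `E` is acyclic: no arc closes a directed cycle. -/
def Acyclic (E : Finset (V × V)) : Prop :=
  ∀ a b : V, (a, b) ∈ E → ¬ Reaches E b a

/-- The hereditary set family associated with the digraph `E`:
all nonempty subsets of out-neighborhoods. -/
def SG (E : Finset (V × V)) : Finset (Finset V) :=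
  (Finset.univ : Finset V).powerset.filter (fun U => U.Nonempty ∧ ∃ v : V, U ⊆ outNbr E v)

lemma mem_outNbr (E : Finset (V × V)) (x u : V) : u ∈ outNbr E x ↔ (x, u) ∈ E := by
  simp only [outNbr, Finset.mem_image, Finset.mem_filter]
  constructor
  · rintro ⟨⟨a, b⟩, ⟨hab, rfl⟩, rfl⟩; exact hab
  · intro h; exact ⟨(x, u), ⟨h, rfl⟩, rfl⟩

theorem sets_to_arborescence (E : Finset (V × V)) (r : V)
    (hacyc : Acyclic E) (hreach : ∀ v : V, Reaches E r v)
    (A : Finset (Finset V)) (hA : A ⊆ SG E)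
    (hdisj : (↑A : Set (Finset V)).Pairwise (fun a b => Disjoint a b)) :
    ∃ T ⊆ E, IsArborescence T r ∧ 1 + ∑ s ∈ A, (s.card - 1) ≤ (leaves T).card := by
  classical
  -- no arc enters r
  have hnor : ∀ x : V, (x, r) ∉ E := fun x hx => hacyc x r hx (hreach x)
  -- witness for each set in A
  set w : Finset V → V := fun s => if h : ∃ v : V, s ⊆ outNbr E v then h.choose else r with hw
  have hwspec : ∀ s ∈ A, s ⊆ outNbr E (w s) := by
    intro s hs
    have h := (Finset.mem_filter.mp (hA hs)).2.2
    simp only [hw, dif_pos h]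
    exact h.choose_spec
  -- elements of sets in A are not r
  have hner : ∀ s ∈ A, ∀ v ∈ s, v ≠ r := by
    intro s hs v hv
    rintro rfl
    exact hnor _ ((mem_outNbr E _ _).mp (hwspec s hs hv))
  -- parent function
  set p : V → V := fun v =>
    if h : ∃ s ∈ A, v ∈ s then w h.choose
    else if h2 : ∃ u : V, (u, v) ∈ E then h2.choose else r with hp
  have harc : ∀ v : V, v ≠ r → (p v, v) ∈ E := by
    intro v hv
    simp only [hp]
    by_cases h : ∃ s ∈ A, v ∈ s
    · rw [dif_pos h]
      exact (mem_outNbr E _ _).mp (hwspec _ h.choose_spec.1 h.choose_spec.2)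
    · rw [dif_neg h]
      have h2 : ∃ u : V, (u, v) ∈ E := by
        rcases (hreach v).cases_tail with rfl | ⟨c, _, hc⟩
        · exact absurd rfl hv
        · exact ⟨c, hc⟩
      rw [dif_pos h2]
      exact h2.choose_spec
  set T : Finset (V × V) := (Finset.univ \ {r}).image (fun v => (p v, v)) with hT
  have memT : ∀ a b : V, (a, b) ∈ T ↔ b ≠ r ∧ a = p b := by
    intro a b
    simp only [hT, Finset.mem_image, Finset.mem_sdiff, Finset.mem_univ, Finset.mem_singleton,
      true_and, Prod.ext_iff]
    constructor
    · rintro ⟨v, hv, rfl, rfl⟩; exact ⟨hv, rfl⟩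
    · rintro ⟨hb, rfl⟩; exact ⟨b, hb, rfl, rfl⟩
  have hTE : T ⊆ E := by
    intro e he
    obtain ⟨a, b⟩ := e
    obtain ⟨hb, rfl⟩ := (memT a b).mp he
    exact harc b hb
  refine ⟨T, hTE, ⟨?_, ?_, ?_⟩, ?_⟩
  · -- inNbr T r = ∅
    ext a
    simp only [inNbr, Finset.mem_image, Finset.mem_filter, Finset.notMem_empty, iff_false]
    rintro ⟨⟨x, y⟩, ⟨hxy, rfl⟩, rfl⟩
    exact ((memT _ _).mp hxy).1 rfl
  · -- in-degree 1
    intro v hv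
    have : inNbr T v = {p v} := by
      ext a
      simp only [inNbr, Finset.mem_image, Finset.mem_filter, Finset.mem_singleton]
      constructor
      · rintro ⟨⟨x, y⟩, ⟨hxy, rfl⟩, rfl⟩
        exact ((memT _ _).mp hxy).2
      · rintro rfl
        exact ⟨(p v, v), ⟨(memT _ _).mpr ⟨hv, rfl⟩, rfl⟩, rfl⟩
    rw [this, Finset.card_singleton]
  · -- reachability
    have hwf : WellFounded (Relation.TransGen (fun a b : V => (a, b) ∈ E)) := by
      have : IsIrrefl V (Relation.TransGen (fun a b : V => (a, b) ∈ E)) := by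
        constructor
        intro a ha
        obtain ⟨b, hb, hba⟩ := Relation.TransGen.head'_iff.mp ha
        exact hacyc a b hb hba
      exact Finite.wellFounded_of_trans_of_irrefl _
    intro v
    induction v using hwf.induction with
    | _ v ih =>
      by_cases hv : v = r
      · subst hv; exact Relation.ReflTransGen.refl
      · have : Reaches T r (p v) := ih (p v) (Relation.TransGen.single (harc v hv))
        exact this.tail ((memT _ _).mpr ⟨hv, rfl⟩)
  · -- leaf count
    set I : Finset V := (Finset.univ \ {r}).image p with hI
    have hleaves : leaves T = Finset.univ \ I := by
      ext v
      simp only [leaves, Finset.mem_filter, Finset.mem_univ, true_and, hI,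
        Finset.mem_image, Finset.mem_sdiff, Finset.mem_singleton, true_and]
      rw [Finset.eq_empty_iff_forall_notMem]
      constructor
      · intro h ⟨u, hu, hpu⟩
        exact h u ((mem_outNbr T v u).mpr ((memT v u).mpr ⟨hu, hpu.symm⟩))
      · intro h u hu
        obtain ⟨hu1, hu2⟩ := (memT v u).mp ((mem_outNbr T v u).mp hu)
        exact h ⟨u, hu1, hu2.symm⟩
    set C : Finset V := A.biUnion id with hC
    have hCsub : C ⊆ Finset.univ \ {r} := by
      intro v hv
      simp only [hC, Finset.mem_biUnion, id] at hv
      obtain ⟨s, hs, hvs⟩ := hv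
      simp only [Finset.mem_sdiff, Finset.mem_univ, Finset.mem_singleton, true_and]
      exact hner s hs v hvs
    have hsplit : Finset.univ \ {r} = C ∪ ((Finset.univ \ {r}) \ C) :=
      (Finset.union_sdiff_of_subset hCsub).symm
    have hIcard : I.card ≤ A.card + ((Finset.univ \ {r}) \ C).card := by
      have : I = C.image p ∪ ((Finset.univ \ {r}) \ C).image p := by
        rw [hI, ← Finset.image_union, Finset.union_sdiff_of_subset hCsub]
      rw [this]
      refine le_trans (Finset.card_union_le _ _) (Nat.add_le_add ?_ Finset.card_image_le)
      refine le_trans (Finset.card_le_card ?_) (Finset.card_image_le (s := A) (f := w))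
      intro v hv
      simp only [Finset.mem_image, hC, Finset.mem_biUnion, id] at hv ⊢
      obtain ⟨u, ⟨s, hs, hus⟩, rfl⟩ := hv
      have h : ∃ s ∈ A, u ∈ s := ⟨s, hs, hus⟩
      refine ⟨h.choose, h.choose_spec.1, ?_⟩
      simp only [hp, dif_pos h]
    have hCcard : C.card = ∑ s ∈ A, s.card := by
      rw [hC]
      exact Finset.card_biUnion fun x hx y hy hxy => hdisj hx hy hxy
    have hsum : ∑ s ∈ A, (s.card - 1) + A.card = ∑ s ∈ A, s.card := by
      rw [Finset.card_eq_sum_ones, ← Finset.sum_add_distrib]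
      refine Finset.sum_congr rfl fun s hs => ?_
      have : s.Nonempty := (Finset.mem_filter.mp (hA hs)).2.1
      have := Finset.card_pos.mpr this
      omega
    have h1 : (Finset.univ \ {r}).card = Fintype.card V - 1 := by
      rw [Finset.card_sdiff_of_subset (by simp), Finset.card_singleton, Finset.card_univ]
    have h2 : ((Finset.univ \ {r}) \ C).card = (Fintype.card V - 1) - C.card := by
      rw [Finset.card_sdiff_of_subset hCsub, h1]
    have h3 : C.card ≤ Fintype.card V - 1 := h1 ▸ Finset.card_le_card hCsub
    have h4 : (leaves T).card = Fintype.card V - I.card := by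
      rw [hleaves, Finset.card_sdiff_of_subset (Finset.subset_univ I), Finset.card_univ]
    have h5 : 1 ≤ Fintype.card V := Fintype.card_pos_iff.mpr ⟨r⟩
    omega
end

section
/- Let 𝒮 be a hereditary set family on a finite ground set, let k ≥ 1, let M ⊆ {s ∈ 𝒮 : |s| ≥ k+1} be a collection of pairwise disjoint sets each of size at least k+1, let U = ⋃_{m ∈ M} m, and suppose M is maximal in the sense that there is no s ∈ 𝒮 with |s \ U| ≥ k+1. Let B be any collection of pairwise disjoint sets from 𝒮, and let A' be a collection of pairwise disjoint sets from 𝒮' := {s \ U : s ∈ 𝒮, s \ U ≠ ∅} satisfying Σ_{b ∈ B'} (|b| − 1) ≤ α · Σ_{a ∈ A'} (|a| − 1) where B' := {b \ U : b ∈ B, b \ U ≠ ∅} and α ≥ 1. Then Σ_{b ∈ B} (|b| − 1) ≤ max{α, (k+1)/k} · ( Σ_{a ∈ A'} (|a| − 1) + Σ_{m ∈ M} (|m| − 1) ). -/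
open Finset

variable {α : Type} [DecidableEq α]

/-- A set family is hereditary if it contains every nonempty subset of each of its members. -/
def Hereditary (S : Finset (Finset α)) : Prop :=
  ∀ s ∈ S, ∀ t ⊆ s, t.Nonempty → t ∈ S

/-- The total weight `w(X) = ∑_{s ∈ X} (|s| - 1)` of a set family. -/
def wgt (X : Finset (Finset α)) : ℕ :=
  ∑ s ∈ X, (s.card - 1)

/-- The members of `X` are pairwise disjoint. -/
def PairwiseDisj (X : Finset (Finset α)) : Prop :=
  (↑X : Set (Finset α)).Pairwise (fun a b => Disjoint a b)

/-- The neighborhood `N(X, A)` of `X` in `A`: members of `A` meeting some member of `X`. -/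
def nbhd (X A : Finset (Finset α)) : Finset (Finset α) :=
  A.filter (fun a => ∃ x ∈ X, (a ∩ x).Nonempty)

/-! Split every `b ∈ B` into its trace `b \ U` outside `U` and its part `b ∩ U` inside `U`.
The outside traces carry weight at most `a · w(A')` by assumption. The inside parts are
disjoint subsets of `U`, so they contribute at most `|U| = ∑_{m ∈ M} |m|`, and each `m ∈ M`
has `|m| ≤ (k+1)/k · (|m| - 1)` because `|m| ≥ k + 1`. -/

omit [DecidableEq α] in
lemma sum_card_sub_one_nonneg {X : Finset (Finset α)} (hX : ∀ s ∈ X, s.Nonempty) :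
    0 ≤ ∑ s ∈ X, ((s.card : ℝ) - 1) :=
  sum_nonneg fun s hs => by
    have : (1 : ℝ) ≤ s.card := by exact_mod_cast (hX s hs).card_pos
    linarith

lemma sum_card_inter_le_card {B : Finset (Finset α)} (hB : PairwiseDisj B) (U : Finset α) :
    ∑ b ∈ B, ((b ∩ U).card : ℝ) ≤ U.card := by
  have hdisj : (B : Set (Finset α)).PairwiseDisjoint (· ∩ U) := fun x hx y hy hxy =>
    (hB hx hy hxy).mono inter_subset_left inter_subset_left
  have hsub : B.biUnion (· ∩ U) ⊆ U := biUnion_subset.2 fun _ _ => inter_subset_right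
  exact_mod_cast card_biUnion hdisj ▸ card_le_card hsub

lemma card_sub_one_le_ite_add_card_inter (b U : Finset α) :
    (b.card : ℝ) - 1 ≤
      (if (b \ U).Nonempty then ((b \ U).card : ℝ) - 1 else 0) + (b ∩ U).card := by
  have hsplit : ((b \ U).card : ℝ) + (b ∩ U).card = b.card := by
    exact_mod_cast card_sdiff_add_card_inter b U
  split_ifs with h
  · linarith
  · rw [not_nonempty_iff_eq_empty.1 h, card_empty, Nat.cast_zero] at hsplit
    linarith

lemma sum_image_sdiff_eq {B : Finset (Finset α)} (hB : PairwiseDisj B) (U : Finset α) :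
    ∑ b ∈ (B.filter fun b => (b \ U).Nonempty).image (· \ U), ((b.card : ℝ) - 1) =
      ∑ b ∈ B.filter (fun b => (b \ U).Nonempty), (((b \ U).card : ℝ) - 1) := by
  refine sum_image fun x hx y hy hxy => ?_
  simp only [coe_filter, Set.mem_ofPred_eq] at hx hy
  by_contra hne
  have hd : Disjoint (x \ U) (y \ U) := (hB hx.1 hy.1 hne).mono sdiff_subset sdiff_subset
  rw [show x \ U = y \ U from hxy, disjoint_self] at hd
  exact hy.2.ne_empty hd

lemma sum_card_sub_one_le_sum_sdiff_add_card {B : Finset (Finset α)} (hB : PairwiseDisj B)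
    (U : Finset α) :
    ∑ b ∈ B, ((b.card : ℝ) - 1) ≤
      ∑ b ∈ (B.filter fun b => (b \ U).Nonempty).image (· \ U), ((b.card : ℝ) - 1) + U.card := by
  rw [sum_image_sdiff_eq hB U, sum_filter]
  calc ∑ b ∈ B, ((b.card : ℝ) - 1)
      ≤ ∑ b ∈ B, ((if (b \ U).Nonempty then ((b \ U).card : ℝ) - 1 else 0) + (b ∩ U).card) :=
        sum_le_sum fun b _ => card_sub_one_le_ite_add_card_inter b U
    _ ≤ _ := by
        rw [sum_add_distrib]
        gcongr
        exact sum_card_inter_le_card hB U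

omit [DecidableEq α] in
lemma sum_card_le_mul_sum_card_sub_one {M : Finset (Finset α)} {k : ℕ} (hk : 1 ≤ k)
    (hM : ∀ m ∈ M, k + 1 ≤ m.card) :
    ∑ m ∈ M, (m.card : ℝ) ≤ ((k : ℝ) + 1) / k * ∑ m ∈ M, ((m.card : ℝ) - 1) := by
  have hk0 : (0 : ℝ) < k := by exact_mod_cast hk
  rw [mul_sum]
  refine sum_le_sum fun m hm => ?_
  have hm : (k : ℝ) + 1 ≤ m.card := by exact_mod_cast hM m hm
  rw [div_mul_eq_mul_div, le_div_iff₀ hk0]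
  nlinarith

theorem reduction_to_bounded_sizes_general (S : Finset (Finset α))
    (k : ℕ) (hk : 1 ≤ k)
    (M : Finset (Finset α)) (hMcard : ∀ m ∈ M, k + 1 ≤ m.card)
    (hMdisj : PairwiseDisj M)
    (U : Finset α) (hU : U = M.biUnion id)
    (B : Finset (Finset α)) (hBdisj : PairwiseDisj B)
    (A' : Finset (Finset α))
    (hA'S : ∀ a ∈ A', ∃ s ∈ S, a = s \ U ∧ (s \ U).Nonempty)
    (a : ℝ)
    (happrox :
      ∑ b ∈ (B.filter (fun b => (b \ U).Nonempty)).image (fun b => b \ U),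
          ((b.card : ℝ) - 1) ≤ a * ∑ x ∈ A', ((x.card : ℝ) - 1)) :
    ∑ b ∈ B, ((b.card : ℝ) - 1) ≤
      max a (((k : ℝ) + 1) / (k : ℝ)) *
        (∑ x ∈ A', ((x.card : ℝ) - 1) + ∑ m ∈ M, ((m.card : ℝ) - 1)) := by
  have hA'nonneg : 0 ≤ ∑ x ∈ A', ((x.card : ℝ) - 1) := sum_card_sub_one_nonneg fun x hx => by
    obtain ⟨s, -, rfl, hs⟩ := hA'S x hx
    exact hs
  have hMnonneg : 0 ≤ ∑ m ∈ M, ((m.card : ℝ) - 1) := sum_card_sub_one_nonneg fun m hm =>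
    card_pos.1 (by linarith [hMcard m hm])
  have hUcard : (U.card : ℝ) = ∑ m ∈ M, (m.card : ℝ) := by
    rw [hU, card_biUnion (t := id) hMdisj]
    push_cast
    rfl
  calc ∑ b ∈ B, ((b.card : ℝ) - 1)
      ≤ a * ∑ x ∈ A', ((x.card : ℝ) - 1) + U.card :=
        (sum_card_sub_one_le_sum_sdiff_add_card hBdisj U).trans (by gcongr)
    _ ≤ a * ∑ x ∈ A', ((x.card : ℝ) - 1) + ((k : ℝ) + 1) / k * ∑ m ∈ M, ((m.card : ℝ) - 1) := by
        rw [hUcard]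
        gcongr
        exact sum_card_le_mul_sum_card_sub_one hk hMcard
    _ ≤ _ := by
        rw [mul_add]
        gcongr
        exacts [le_max_left _ _, le_max_right _ _]

theorem reduction_to_bounded_sizes (S : Finset (Finset α)) (hher : Hereditary S)
    (hne : ∀ s ∈ S, s.Nonempty) (k : ℕ) (hk : 1 ≤ k)
    (M : Finset (Finset α)) (hMS : M ⊆ S) (hMcard : ∀ m ∈ M, k + 1 ≤ m.card)
    (hMdisj : PairwiseDisj M)
    (U : Finset α) (hU : U = M.biUnion id)
    (hmax : ¬ ∃ s ∈ S, k + 1 ≤ (s \ U).card)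
    (B : Finset (Finset α)) (hBS : B ⊆ S) (hBdisj : PairwiseDisj B)
    (A' : Finset (Finset α))
    (hA'S : ∀ a ∈ A', ∃ s ∈ S, a = s \ U ∧ (s \ U).Nonempty)
    (hA'disj : PairwiseDisj A')
    (a : ℝ) (ha : 1 ≤ a)
    (happrox :
      ∑ b ∈ (B.filter (fun b => (b \ U).Nonempty)).image (fun b => b \ U),
          ((b.card : ℝ) - 1) ≤ a * ∑ x ∈ A', ((x.card : ℝ) - 1)) :
    ∑ b ∈ B, ((b.card : ℝ) - 1) ≤
      max a (((k : ℝ) + 1) / (k : ℝ)) *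
        (∑ x ∈ A', ((x.card : ℝ) - 1) + ∑ m ∈ M, ((m.card : ℝ) - 1)) :=
  reduction_to_bounded_sizes_general S k hk M hMcard hMdisj U hU B hBdisj A' hA'S a happrox
end

section
/- Let 𝒮 be an instance of the hereditary 3-set packing problem, A a feasible solution without local improvements of size at most 10, B an optimum solution, B₁ the sets in B intersecting exactly one set of A, and B₂ the sets v ∈ B with |v| = 3 that have exactly two incident edges in the conflict graph going to two distinct sets of A. Then for every U ⊆ A there exists a pairwise disjoint collection X ⊆ 𝒮 such that: (1) every set in X intersects only sets of A lying in U; (2) Σ_{x ∈ X}(|x|−1) equals the total Step-1 weight received by U (each v ∈ B₁ ∩ N(U,B₁∪B₂) sends w(v) to its unique neighbor, each v ∈ B₂ ∩ N(U,B₁∪B₂) sends 1 along each of its two edges); (3) there is a bijection between N(U, B₁ ∪ B₂) and X mapping each v to itself or a two-element subset of v. -/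
open Finset

variable {α : Type} [DecidableEq α]

/-- `X` is a local improvement of `A` (within the instance `S`): a pairwise disjoint
sub-collection of `S` with `w(X) > w(N(X,A))`, or `w(X) = w(N(X,A))` and `X` contains
more sets of weight 2 (i.e. cardinality 3) than `N(X,A)`. -/
def IsImprovement (S A X : Finset (Finset α)) : Prop :=
  X ⊆ S ∧ PairwiseDisj X ∧
    (wgt (nbhd X A) < wgt X ∨
      (wgt X = wgt (nbhd X A) ∧
        ((nbhd X A).filter (fun s => s.card = 3)).card < (X.filter (fun s => s.card = 3)).card))

lemma mem_nbhd' {X A : Finset (Finset α)} {a : Finset α} :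
    a ∈ nbhd X A ↔ a ∈ A ∧ ∃ x ∈ X, (a ∩ x).Nonempty := by
  simp [nbhd]

theorem step_one_representation (S : Finset (Finset α))
    (hher : ∀ s ∈ S, ∀ t ⊆ s, 2 ≤ t.card → t ∈ S)
    (hsize : ∀ s ∈ S, 2 ≤ s.card ∧ s.card ≤ 3)
    (A B : Finset (Finset α)) (hA : A ⊆ S) (hAdisj : PairwiseDisj A)
    (hB : B ⊆ S) (hBdisj : PairwiseDisj B)
    (hno : ∀ X : Finset (Finset α), X.card ≤ 10 → ¬ IsImprovement S A X)
    (hopt : ∀ B' : Finset (Finset α), B' ⊆ S → PairwiseDisj B' → wgt B' ≤ wgt B)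
    (B1 B2 : Finset (Finset α))
    (hB1 : B1 = B.filter (fun v => (nbhd {v} A).card = 1))
    (hB2 : B2 = B.filter (fun v =>
      v.card = 3 ∧ (∑ a ∈ A, (a ∩ v).card) = 2 ∧ (nbhd {v} A).card = 2))
    (U : Finset (Finset α)) (hU : U ⊆ A) :
    ∃ X : Finset (Finset α), X ⊆ S ∧ PairwiseDisj X ∧
      nbhd X A ⊆ U ∧
      wgt X = (∑ v ∈ nbhd U B1, (v.card - 1)) + (∑ v ∈ B2, ((nbhd {v} A) ∩ U).card) ∧
      ∃ f : Finset α → Finset α,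
        Set.BijOn f (↑(nbhd U (B1 ∪ B2))) (↑X) ∧
        ∀ v ∈ nbhd U (B1 ∪ B2), f v = v ∨ (f v ⊆ v ∧ (f v).card = 2) := by
  classical
  set g : Finset α → Finset α :=
    fun v => v.filter (fun p => ∀ a ∈ A, p ∈ a → a ∈ U) with hgdef
  have hgsub : ∀ v, g v ⊆ v := fun v => filter_subset _ _
  have hmemg : ∀ v p, p ∈ g v ↔ p ∈ v ∧ ∀ a ∈ A, p ∈ a → a ∈ U := by
    intro v p; simp [hgdef]
  set D : Finset (Finset α) := nbhd U (B1 ∪ B2) with hDdef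
  have hDB : D ⊆ B := by
    intro v hv
    rw [hDdef, mem_nbhd'] at hv
    rcases mem_union.mp hv.1 with h | h
    · rw [hB1] at h; exact (mem_filter.mp h).1
    · rw [hB2] at h; exact (mem_filter.mp h).1
  have hgne : ∀ v ∈ D, (g v).Nonempty := by
    intro v hv
    rw [hDdef, mem_nbhd'] at hv
    obtain ⟨-, u, hu, p, hp⟩ := hv
    rw [mem_inter] at hp
    refine ⟨p, (hmemg v p).mpr ⟨hp.1, ?_⟩⟩
    intro a ha hpa
    have hau : a = u := by
      by_contra hne
      exact disjoint_left.mp (hAdisj (mem_coe.mpr ha) (mem_coe.mpr (hU hu)) hne) hpa hp.2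
    exact hau ▸ hu
  have hNsub : ∀ v : Finset α, nbhd {v} A ⊆ A := fun v => filter_subset _ _
  -- general formula for `g v`
  have hgv : ∀ v : Finset α,
      g v = v \ ((nbhd {v} A \ U).biUnion (fun a => a ∩ v)) := by
    intro v; ext p
    rw [hmemg, mem_sdiff, mem_biUnion]
    constructor
    · rintro ⟨hpv, h⟩
      refine ⟨hpv, ?_⟩
      rintro ⟨a, ha, hpa⟩
      rw [mem_sdiff] at ha
      rw [mem_inter] at hpa
      exact ha.2 (h a (hNsub v ha.1) hpa.1)
    · rintro ⟨hpv, h⟩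
      refine ⟨hpv, fun a ha hpa => ?_⟩
      by_contra haU
      exact h ⟨a, mem_sdiff.mpr
        ⟨mem_nbhd'.mpr ⟨ha, v, mem_singleton_self v, ⟨p, mem_inter.mpr ⟨hpa, hpv⟩⟩⟩, haU⟩,
        mem_inter.mpr ⟨hpa, hpv⟩⟩
  -- B1: g v = v
  have hB1eq : ∀ v ∈ B1, (∃ u ∈ U, (v ∩ u).Nonempty) → g v = v := by
    intro v hv hmeet
    rw [hB1, mem_filter] at hv
    obtain ⟨u, hu, hne⟩ := hmeet
    have huN : u ∈ nbhd {v} A :=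
      mem_nbhd'.mpr ⟨hU hu, v, mem_singleton_self v, by rwa [inter_comm]⟩
    have hNeq : ({u} : Finset (Finset α)) = nbhd {v} A :=
      eq_of_subset_of_card_le (singleton_subset_iff.mpr huN) (by rw [hv.2, card_singleton])
    have hempty : nbhd {v} A \ U = ∅ := by
      rw [← hNeq, sdiff_eq_empty_iff_subset, singleton_subset_iff]; exact hu
    rw [hgv v, hempty]
    simp
  -- B2: card of g v
  have hB2card : ∀ v ∈ B2, (∃ u ∈ U, (v ∩ u).Nonempty) →
      (g v).card = 1 + ((nbhd {v} A) ∩ U).card ∧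
      1 ≤ ((nbhd {v} A) ∩ U).card ∧ ((nbhd {v} A) ∩ U).card ≤ 2 := by
    intro v hv hmeet
    rw [hB2, mem_filter] at hv
    obtain ⟨hvB, hv3, hsum, hN2⟩ := hv
    have hone : ∀ a ∈ nbhd {v} A, (a ∩ v).card = 1 := by
      have hrestrict : ∑ a ∈ nbhd {v} A, (a ∩ v).card = 2 := by
        rw [← hsum]
        apply Finset.sum_subset (hNsub v)
        intro a haA haN
        rw [card_eq_zero, ← not_nonempty_iff_eq_empty]
        intro hne
        exact haN (mem_nbhd'.mpr ⟨haA, v, mem_singleton_self v, hne⟩)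
      obtain ⟨a₁, a₂, hne12, hNeq⟩ := card_eq_two.mp hN2
      have hin : ∀ a ∈ nbhd {v} A, 1 ≤ (a ∩ v).card := by
        intro a ha
        obtain ⟨-, x, hx, hne⟩ := mem_nbhd'.mp ha
        rw [mem_singleton] at hx
        subst hx
        exact card_pos.mpr hne
      have h1 := hin a₁ (by rw [hNeq]; simp)
      have h2 := hin a₂ (by rw [hNeq]; simp)
      have hsum2 : (a₁ ∩ v).card + (a₂ ∩ v).card = 2 := by
        rw [hNeq, Finset.sum_pair hne12] at hrestrict; exact hrestrict
      intro a ha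
      rw [hNeq, mem_insert, mem_singleton] at ha
      rcases ha with rfl | rfl <;> omega
    set R : Finset α := (nbhd {v} A \ U).biUnion (fun a => a ∩ v) with hRdef
    have hRcard : R.card = (nbhd {v} A \ U).card := by
      rw [hRdef, Finset.card_biUnion]
      · rw [Finset.card_eq_sum_ones (nbhd {v} A \ U)]
        exact Finset.sum_congr rfl fun a ha => hone a (mem_sdiff.mp ha).1
      · intro a ha b hb hab
        have haA := hNsub v (mem_sdiff.mp ha).1
        have hbA := hNsub v (mem_sdiff.mp hb).1
        exact (hAdisj (mem_coe.mpr haA) (mem_coe.mpr hbA) hab).mono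
          inter_subset_left inter_subset_left
    have hRsub : R ⊆ v := by
      rw [hRdef]
      exact biUnion_subset.mpr fun a _ => inter_subset_right
    have hgc : (g v).card = v.card - R.card := by
      rw [hgv v, ← hRdef]; exact card_sdiff_of_subset hRsub
    have hsplit : (nbhd {v} A \ U).card + (nbhd {v} A ∩ U).card = 2 := by
      rw [card_sdiff_add_card_inter, hN2]
    have hk1 : 1 ≤ (nbhd {v} A ∩ U).card := by
      obtain ⟨u, hu, hne⟩ := hmeet
      refine card_pos.mpr ⟨u, mem_inter.mpr ⟨?_, hu⟩⟩
      exact mem_nbhd'.mpr ⟨hU hu, v, mem_singleton_self v, by rwa [inter_comm]⟩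
    refine ⟨by omega, hk1, by omega⟩
  have hB1B2 : ∀ v, v ∈ B1 → v ∈ B2 → False := by
    intro v h1 h2
    rw [hB1, mem_filter] at h1
    rw [hB2, mem_filter] at h2
    have := h1.2
    have := h2.2.2.2
    omega
  -- the condition (3)
  have hbr : ∀ v ∈ D, g v = v ∨ (g v ⊆ v ∧ (g v).card = 2) := by
    intro v hv
    have hv' := hv
    rw [hDdef, mem_nbhd'] at hv'
    obtain ⟨hv12, hmeet⟩ := hv'
    rcases mem_union.mp hv12 with h | h
    · exact Or.inl (hB1eq v h hmeet)
    · obtain ⟨hc, hk1, hk2⟩ := hB2card v h hmeet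
      have hv3 : v.card = 3 := by rw [hB2, mem_filter] at h; exact h.2.1
      by_cases hk : ((nbhd {v} A) ∩ U).card = 2
      · exact Or.inl (eq_of_subset_of_card_le (hgsub v) (by omega))
      · exact Or.inr ⟨hgsub v, by omega⟩
  have hinj : ∀ v ∈ D, ∀ w ∈ D, g v = g w → v = w := by
    intro v hv w hw he
    by_contra hne
    have hd : Disjoint v w :=
      hBdisj (mem_coe.mpr (hDB hv)) (mem_coe.mpr (hDB hw)) hne
    obtain ⟨p, hp⟩ := hgne v hv
    exact disjoint_left.mp hd (hgsub v hp) (hgsub w (he ▸ hp))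
  refine ⟨D.image g, ?_, ?_, ?_, ?_, g, ?_, ?_⟩
  · -- X ⊆ S
    intro x hx
    obtain ⟨v, hv, rfl⟩ := mem_image.mp hx
    rcases hbr v hv with he | ⟨hs, hc⟩
    · rw [he]; exact hB (hDB hv)
    · exact hher v (hB (hDB hv)) (g v) hs (by omega)
  · -- PairwiseDisj
    intro x hx y hy hne
    obtain ⟨v, hv, rfl⟩ := mem_image.mp (mem_coe.mp hx)
    obtain ⟨w, hw, rfl⟩ := mem_image.mp (mem_coe.mp hy)
    have hvw : v ≠ w := fun h => hne (by rw [h])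
    exact (hBdisj (mem_coe.mpr (hDB hv)) (mem_coe.mpr (hDB hw)) hvw).mono
      (hgsub v) (hgsub w)
  · -- nbhd X A ⊆ U
    intro a ha
    rw [mem_nbhd'] at ha
    obtain ⟨haA, x, hx, p, hp⟩ := ha
    obtain ⟨v, hv, rfl⟩ := mem_image.mp hx
    rw [mem_inter] at hp
    exact ((hmemg v p).mp hp.2).2 a haA hp.1
  · -- weight
    have hw1 : wgt (D.image g) = ∑ v ∈ D, ((g v).card - 1) := by
      unfold wgt
      exact Finset.sum_image hinj
    have hsplit : D = nbhd U B1 ∪ nbhd U B2 := by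
      rw [hDdef]; unfold nbhd; exact filter_union _ _ _
    have hdisj : Disjoint (nbhd U B1) (nbhd U B2) := by
      rw [disjoint_left]
      intro v h1 h2
      exact hB1B2 v (mem_nbhd'.mp h1).1 (mem_nbhd'.mp h2).1
    rw [hw1, hsplit, Finset.sum_union hdisj]
    congr 1
    · apply Finset.sum_congr rfl
      intro v hv
      obtain ⟨h1, hmeet⟩ := mem_nbhd'.mp hv
      rw [hB1eq v h1 hmeet]
    · have h2 : ∀ v ∈ nbhd U B2, ((g v).card - 1) = ((nbhd {v} A) ∩ U).card := by
        intro v hv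
        obtain ⟨h2, hmeet⟩ := mem_nbhd'.mp hv
        obtain ⟨hc, hk1, -⟩ := hB2card v h2 hmeet
        omega
      rw [Finset.sum_congr rfl h2]
      apply Finset.sum_subset
      · exact filter_subset _ _
      · intro v hv hvn
        rw [card_eq_zero, ← not_nonempty_iff_eq_empty]
        rintro ⟨a, ha⟩
        rw [mem_inter] at ha
        obtain ⟨-, x, hx, hne⟩ := mem_nbhd'.mp ha.1
        rw [mem_singleton] at hx
        subst hx
        exact hvn (mem_nbhd'.mpr ⟨hv, a, ha.2, by rwa [inter_comm]⟩)
  · -- BijOn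
    refine ⟨?_, ?_, ?_⟩
    · intro v hv
      exact mem_coe.mpr (mem_image_of_mem g (mem_coe.mp hv))
    · intro v hv w hw h
      exact hinj v (mem_coe.mp hv) w (mem_coe.mp hw) h
    · intro x hx
      obtain ⟨v, hv, rfl⟩ := mem_image.mp (mem_coe.mp hx)
      exact ⟨v, mem_coe.mpr hv, rfl⟩
  · -- condition (3)
    exact hbr
end

section
/- Under the setting of the hereditary 3-set packing analysis (A locally optimum up to improvements of size 10, B optimum, B₁, B₂ and Step 1 of the weight distribution as defined), no set u ∈ A receives more than w(u) = |u| − 1 units of weight in Step 1. -/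
open Finset

variable {α : Type} [DecidableEq α]

theorem step_one_at_most_own_weight (S : Finset (Finset α))
    (hher : ∀ s ∈ S, ∀ t ⊆ s, 2 ≤ t.card → t ∈ S)
    (hsize : ∀ s ∈ S, 2 ≤ s.card ∧ s.card ≤ 3)
    (A B : Finset (Finset α)) (hA : A ⊆ S) (hAdisj : PairwiseDisj A)
    (hB : B ⊆ S) (hBdisj : PairwiseDisj B)
    (hno : ∀ X : Finset (Finset α), X.card ≤ 10 → ¬ IsImprovement S A X)
    (hopt : ∀ B' : Finset (Finset α), B' ⊆ S → PairwiseDisj B' → wgt B' ≤ wgt B)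
    (B1 B2 : Finset (Finset α))
    (hB1 : B1 = B.filter (fun v => (nbhd {v} A).card = 1))
    (hB2 : B2 = B.filter (fun v =>
      v.card = 3 ∧ (∑ a ∈ A, (a ∩ v).card) = 2 ∧ (nbhd {v} A).card = 2)) :
    ∀ u ∈ A,
      (∑ v ∈ B1.filter (fun v => (u ∩ v).Nonempty), (v.card - 1)) +
        (B2.filter (fun v => (u ∩ v).Nonempty)).card ≤ u.card - 1 := by

  intro u hu
  by_contra hcon
  push_neg at hcon
  classical
  set R1 := B1.filter (fun v => (u ∩ v).Nonempty) with hR1def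
  set R2 := B2.filter (fun v => (u ∩ v).Nonempty) with hR2def
  set R := R1 ∪ R2 with hRdef
  -- memberships
  have hR1B : ∀ v ∈ R1, v ∈ B := by
    intro v hv; rw [hR1def, hB1] at hv
    exact (Finset.mem_filter.mp (Finset.mem_filter.mp hv).1).1
  have hR2B : ∀ v ∈ R2, v ∈ B := by
    intro v hv; rw [hR2def, hB2] at hv
    exact (Finset.mem_filter.mp (Finset.mem_filter.mp hv).1).1
  have hRB : ∀ v ∈ R, v ∈ B := by
    intro v hv; rcases Finset.mem_union.mp hv with h | h
    · exact hR1B v h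
    · exact hR2B v h
  have hRmeet : ∀ v ∈ R, (u ∩ v).Nonempty := by
    intro v hv; rcases Finset.mem_union.mp hv with h | h
    · exact (Finset.mem_filter.mp h).2
    · exact (Finset.mem_filter.mp h).2
  have hR1nb : ∀ v ∈ R1, (nbhd {v} A).card = 1 := by
    intro v hv; rw [hR1def, hB1] at hv
    exact (Finset.mem_filter.mp (Finset.mem_filter.mp hv).1).2
  have hR2prop : ∀ v ∈ R2, v.card = 3 ∧ (∑ a ∈ A, (a ∩ v).card) = 2 ∧
      (nbhd {v} A).card = 2 := by
    intro v hv; rw [hR2def, hB2] at hv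
    exact (Finset.mem_filter.mp (Finset.mem_filter.mp hv).1).2
  -- disjointness facts
  have hAd : ∀ a ∈ A, a ≠ u → Disjoint a u := fun a ha hne => hAdisj ha hu hne
  have hBd : ∀ v ∈ R, ∀ v' ∈ R, v ≠ v' → Disjoint v v' :=
    fun v hv v' hv' hne => hBdisj (hRB v hv) (hRB v' hv') hne
  -- the reduction map
  set P : α → Prop := fun x => ∀ a ∈ A, x ∈ a → x ∈ u with hP
  set hat : Finset α → Finset α := fun v => v.filter P with hhat
  have hhatsub : ∀ v, hat v ⊆ v := fun v => Finset.filter_subset _ _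
  have hcapsub : ∀ v, u ∩ v ⊆ hat v := by
    intro v x hx
    rcases Finset.mem_inter.mp hx with ⟨hxu, hxv⟩
    exact Finset.mem_filter.mpr ⟨hxv, fun a _ _ => hxu⟩
  have hnbu : ∀ v, (u ∩ v).Nonempty → u ∈ nbhd {v} A := by
    intro v hne
    exact Finset.mem_filter.mpr ⟨hu, v, Finset.mem_singleton_self v, hne⟩
  -- hat is identity on R1
  have hhatR1 : ∀ v ∈ R1, hat v = v := by
    intro v hv
    have hcard1 := hR1nb v hv
    obtain ⟨a, ha⟩ := Finset.card_eq_one.mp hcard1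
    have huu : u ∈ nbhd {v} A := hnbu v (hRmeet v (Finset.mem_union_left _ hv))
    rw [ha, Finset.mem_singleton] at huu
    have hnb : nbhd {v} A = {u} := by rw [ha, huu]
    apply Finset.filter_true_of_mem
    intro x hxv a' ha' hxa'
    have : a' ∈ nbhd {v} A := by
      exact Finset.mem_filter.mpr ⟨ha', v, Finset.mem_singleton_self v, ⟨x, Finset.mem_inter.mpr ⟨hxa', hxv⟩⟩⟩
    rw [hnb, Finset.mem_singleton] at this
    rw [← this]; exact hxa'
  -- hat has card 2 on R2
  have hhatR2 : ∀ v ∈ R2, (hat v).card = 2 := by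
    intro v hv
    obtain ⟨hv3, hsum, hnb2⟩ := hR2prop v hv
    have huu : u ∈ nbhd {v} A := hnbu v (hRmeet v (Finset.mem_union_right _ hv))
    obtain ⟨x, y, hxy, hxyeq⟩ := Finset.card_eq_two.mp hnb2
    -- get the other neighbor a₀
    obtain ⟨a₀, ha₀ne, hpair⟩ : ∃ a₀, a₀ ≠ u ∧ nbhd {v} A = {u, a₀} := by
      rw [hxyeq, Finset.mem_insert, Finset.mem_singleton] at huu
      rcases huu with h | h
      · exact ⟨y, by rw [← h] at hxy; exact fun hc => hxy hc.symm, by rw [hxyeq, h]⟩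
      · exact ⟨x, by rw [← h] at hxy; exact fun hc => hxy hc, by rw [hxyeq, h, Finset.pair_comm]⟩
    have ha₀A : a₀ ∈ A := by
      have : a₀ ∈ nbhd {v} A := by rw [hpair]; exact Finset.mem_insert_of_mem (Finset.mem_singleton_self _)
      exact Finset.mem_of_mem_filter _ this
    have ha₀v : (a₀ ∩ v).Nonempty := by
      have : a₀ ∈ nbhd {v} A := by rw [hpair]; exact Finset.mem_insert_of_mem (Finset.mem_singleton_self _)
      obtain ⟨-, x', hx', hne⟩ := Finset.mem_filter.mp this
      rwa [Finset.mem_singleton.mp hx'] at hne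
    -- restrict the sum to the two neighbors
    have hsub : nbhd {v} A ⊆ A := Finset.filter_subset _ _
    have hzero : ∀ a ∈ A, a ∉ nbhd {v} A → (a ∩ v).card = 0 := by
      intro a ha hna
      rw [Finset.card_eq_zero]
      by_contra hne
      exact hna (Finset.mem_filter.mpr ⟨ha, v, Finset.mem_singleton_self v,
        Finset.nonempty_iff_ne_empty.mpr hne⟩)
    have hsum2 : (u ∩ v).card + (a₀ ∩ v).card = 2 := by
      have := Finset.sum_subset hsub hzero
      rw [hsum] at this
      rw [← this, hpair, Finset.sum_pair ha₀ne.symm]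
    have huv1 : (u ∩ v).card = 1 ∧ (a₀ ∩ v).card = 1 := by
      have h1 : 1 ≤ (u ∩ v).card := Finset.card_pos.mpr (hRmeet v (Finset.mem_union_right _ hv))
      have h2 : 1 ≤ (a₀ ∩ v).card := Finset.card_pos.mpr ha₀v
      omega
    -- the removed part is exactly a₀ ∩ v
    have hrem : v.filter (fun x => ¬ P x) = a₀ ∩ v := by
      ext x
      simp only [Finset.mem_filter, Finset.mem_inter]
      constructor
      · rintro ⟨hxv, hnp⟩
        obtain ⟨a, haA, hxa, hxu⟩ : ∃ a ∈ A, x ∈ a ∧ x ∉ u := by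
          by_contra hc
          push_neg at hc
          exact hnp (fun a ha hxa => hc a ha hxa)
        have : a ∈ nbhd {v} A := Finset.mem_filter.mpr ⟨haA, v, Finset.mem_singleton_self v,
          ⟨x, Finset.mem_inter.mpr ⟨hxa, hxv⟩⟩⟩
        rw [hpair, Finset.mem_insert, Finset.mem_singleton] at this
        rcases this with h | h
        · exact absurd (h ▸ hxa) hxu
        · exact ⟨h ▸ hxa, hxv⟩
      · rintro ⟨hxa, hxv⟩
        exact ⟨hxv, fun h => Finset.disjoint_left.mp (hAd a₀ ha₀A ha₀ne) hxa
          (h a₀ ha₀A hxa)⟩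
    have hcards : (hat v).card + (v.filter (fun x => ¬ P x)).card = v.card :=
      Finset.card_filter_add_card_filter_not _
    rw [hrem, huv1.2, hv3] at hcards
    omega
  -- injectivity of hat on R
  have hhatne : ∀ v ∈ R, (hat v).Nonempty := by
    intro v hv
    obtain ⟨x, hx⟩ := hRmeet v hv
    exact ⟨x, hcapsub v hx⟩
  have hinj : ∀ v ∈ R, ∀ v' ∈ R, hat v = hat v' → v = v' := by
    intro v hv v' hv' heq
    by_contra hne
    have hd : Disjoint (hat v) (hat v') :=
      Disjoint.mono (hhatsub v) (hhatsub v') (hBd v hv v' hv' hne)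
    rw [heq, disjoint_self] at hd
    exact Finset.Nonempty.ne_empty (heq ▸ hhatne v hv) hd
  set X := R.image hat with hXdef
  -- X ⊆ S
  have hXS : X ⊆ S := by
    intro s hs
    obtain ⟨v, hv, rfl⟩ := Finset.mem_image.mp hs
    rcases Finset.mem_union.mp hv with h | h
    · rw [hhatR1 v h]; exact hB (hR1B v h)
    · exact hher v (hB (hR2B v h)) (hat v) (hhatsub v) (by rw [hhatR2 v h])
  -- X pairwise disjoint
  have hXdisj : PairwiseDisj X := by
    intro s hs t ht hst
    obtain ⟨v, hv, rfl⟩ := Finset.mem_image.mp hs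
    obtain ⟨v', hv', rfl⟩ := Finset.mem_image.mp ht
    have hne : v ≠ v' := fun h => hst (by rw [h])
    exact Disjoint.mono (hhatsub v) (hhatsub v') (hBd v hv v' hv' hne)
  -- R nonempty
  have hRne : R.Nonempty := by
    rw [Finset.nonempty_iff_ne_empty]
    intro h
    rw [hRdef, Finset.union_eq_empty] at h
    rw [h.1, h.2] at hcon
    simp at hcon
  -- nbhd X A = {u}
  have hnbX : nbhd X A = {u} := by
    ext a
    rw [Finset.mem_singleton]
    constructor
    · intro ha
      obtain ⟨haA, s, hs, x, hx⟩ := Finset.mem_filter.mp ha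
      obtain ⟨v, hv, rfl⟩ := Finset.mem_image.mp hs
      rcases Finset.mem_inter.mp hx with ⟨hxa, hxhat⟩
      have hxu : x ∈ u := (Finset.mem_filter.mp hxhat).2 a haA hxa
      by_contra hne
      exact Finset.disjoint_left.mp (hAd a haA hne) hxa hxu
    · rintro rfl
      obtain ⟨v, hv⟩ := hRne
      obtain ⟨x, hx⟩ := hRmeet v hv
      exact Finset.mem_filter.mpr ⟨hu, hat v, Finset.mem_image_of_mem hat hv,
        ⟨x, Finset.mem_inter.mpr ⟨(Finset.mem_inter.mp hx).1, hcapsub v hx⟩⟩⟩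
  -- R1 and R2 disjoint
  have hR12 : Disjoint R1 R2 := by
    rw [Finset.disjoint_left]
    intro v h1 h2
    have := hR1nb v h1
    have := (hR2prop v h2).2.2
    omega
  -- weight of X
  have hwX : wgt X = (∑ v ∈ R1, (v.card - 1)) + R2.card := by
    rw [hXdef, wgt, Finset.sum_image hinj, hRdef, Finset.sum_union hR12]
    congr 1
    · exact Finset.sum_congr rfl (fun v hv => by rw [hhatR1 v hv])
    · rw [Finset.card_eq_sum_ones]
      exact Finset.sum_congr rfl (fun v hv => by rw [hhatR2 v hv])
  -- card bound
  have hXcard : X.card ≤ 10 := by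
    have h1 : X.card ≤ R.card := Finset.card_image_le
    have h2 : R.card ≤ (R.biUnion (fun v => u ∩ v)).card := by
      apply Finset.card_le_card_biUnion
      · intro v hv v' hv' hne
        exact Disjoint.mono Finset.inter_subset_right Finset.inter_subset_right
          (hBd v hv v' hv' hne)
      · exact hRmeet
    have h3 : R.biUnion (fun v => u ∩ v) ⊆ u := by
      intro x hx
      obtain ⟨v, -, hxv⟩ := Finset.mem_biUnion.mp hx
      exact (Finset.mem_inter.mp hxv).1
    have h4 : u.card ≤ 3 := (hsize u (hA hu)).2
    have := Finset.card_le_card h3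
    omega
  -- the contradiction
  apply hno X hXcard
  refine ⟨hXS, hXdisj, Or.inl ?_⟩
  rw [hnbX, hwX, wgt, Finset.sum_singleton]
  exact hcon
end
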